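/- Let Φ be a positive, trace-preserving super-operator from m×m matrices to k×k matrices, and let σ be a separable bipartite state on ℂ^m ⊗ ℂ^n. Then (Φ ⊗ id_n)[σ] is positive semidefinite and ‖(Φ ⊗ id_n)[σ]‖_tr = 1; equivalently, the generalized negativity N_Φ(σ) = (‖(Φ ⊗ id_n)[σ]‖_tr − 1)/2 equals 0. -/

import Mathlib

open scoped Kronecker ComplexOrder Matrix

namespace ChannelDiscrimination

/-- The trace norm `Tr √(Aᴴ A)` of a complex square matrix. -/
noncomputable def traceNorm {ι : Type*} [Fintype ι] [DecidableEq ι]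
    (A : Matrix ι ι ℂ) : ℝ :=
  ((Matrix.posSemidef_conjTranspose_mul_self A).1.eigenvectorUnitary.1 *
      Matrix.diagonal (((↑) : ℝ → ℂ) ∘ (√·) ∘ (Matrix.posSemidef_conjTranspose_mul_self A).1.eigenvalues) *
      (star (Matrix.posSemidef_conjTranspose_mul_self A).1.eigenvectorUnitary :
        Matrix ι ι ℂ)).trace.re

/-- A state: a positive semidefinite matrix of trace one. -/
def IsState {ι : Type*} [Fintype ι] (ρ : Matrix ι ι ℂ) : Prop :=
  ρ.PosSemidef ∧ ρ.trace = 1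

/-- Separability of a bipartite matrix on `ℂ^m ⊗ ℂ^n`. -/
def IsSeparable {m n : ℕ} (σ : Matrix (Fin m × Fin n) (Fin m × Fin n) ℂ) : Prop :=
  ∃ (N : ℕ) (p : Fin N → ℝ) (ρ : Fin N → Matrix (Fin m) (Fin m) ℂ)
    (τ : Fin N → Matrix (Fin n) (Fin n) ℂ),
    (∀ i, 0 ≤ p i) ∧ (∑ i, p i = 1) ∧ (∀ i, IsState (ρ i)) ∧ (∀ i, IsState (τ i)) ∧
    σ = ∑ i, (p i : ℂ) • (ρ i ⊗ₖ τ i)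

/-- `Φ ⊗ id_n` for a super-operator `Φ` from `m×m` to `k×k` matrices. -/
def tensorId {m k : ℕ} (n : ℕ)
    (Φ : Matrix (Fin m) (Fin m) ℂ →ₗ[ℂ] Matrix (Fin k) (Fin k) ℂ) :
    Matrix (Fin m × Fin n) (Fin m × Fin n) ℂ →ₗ[ℂ]
      Matrix (Fin k × Fin n) (Fin k × Fin n) ℂ where
  toFun M := Matrix.of fun p q => Φ (Matrix.of fun i j => M (i, p.2) (j, q.2)) p.1 q.1
  map_add' M N := by
    ext p q
    show Φ ((Matrix.of fun i j => M (i, p.2) (j, q.2)) +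
        (Matrix.of fun i j => N (i, p.2) (j, q.2))) p.1 q.1 = _
    rw [map_add]
    rfl
  map_smul' c M := by
    ext p q
    show Φ (c • (Matrix.of fun i j => M (i, p.2) (j, q.2))) p.1 q.1 = _
    rw [map_smul]
    rfl

/-- A positive super-operator. -/
def IsPositiveMap {m k : ℕ}
    (Φ : Matrix (Fin m) (Fin m) ℂ →ₗ[ℂ] Matrix (Fin k) (Fin k) ℂ) : Prop :=
  ∀ X : Matrix (Fin m) (Fin m) ℂ, X.PosSemidef → (Φ X).PosSemidef

/-- A trace-preserving super-operator. -/
def IsTracePreserving {m k : ℕ}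
    (Φ : Matrix (Fin m) (Fin m) ℂ →ₗ[ℂ] Matrix (Fin k) (Fin k) ℂ) : Prop :=
  ∀ X : Matrix (Fin m) (Fin m) ℂ, (Φ X).trace = X.trace

/-- A completely positive super-operator: `Φ ⊗ id_n` is positive for every `n`. -/
def IsCompletelyPositive {m k : ℕ}
    (Φ : Matrix (Fin m) (Fin m) ℂ →ₗ[ℂ] Matrix (Fin k) (Fin k) ℂ) : Prop :=
  ∀ (n : ℕ) (M : Matrix (Fin m × Fin n) (Fin m × Fin n) ℂ),
    M.PosSemidef → (tensorId n Φ M).PosSemidef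

/-- A (quantum) channel: completely positive and trace-preserving. -/
def IsChannel {m k : ℕ}
    (Φ : Matrix (Fin m) (Fin m) ℂ →ₗ[ℂ] Matrix (Fin k) (Fin k) ℂ) : Prop :=
  IsCompletelyPositive Φ ∧ IsTracePreserving Φ

/-- An entanglement-breaking channel. -/
def IsEntanglementBreaking {m k : ℕ}
    (Φ : Matrix (Fin m) (Fin m) ℂ →ₗ[ℂ] Matrix (Fin k) (Fin k) ℂ) : Prop :=
  IsChannel Φ ∧ ∀ (n : ℕ) (ρ : Matrix (Fin m × Fin n) (Fin m × Fin n) ℂ),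
    IsState ρ → IsSeparable (tensorId n Φ ρ)

/-- `pad1 M c` is the `(k+1)×(k+1)` matrix with `M` as its top-left `k×k` block,
`c` in the bottom-right corner, and zeros elsewhere. -/
def pad1 {k : ℕ} (M : Matrix (Fin k) (Fin k) ℂ) (c : ℂ) :
    Matrix (Fin (k + 1)) (Fin (k + 1)) ℂ :=
  Matrix.of fun a b =>
    Fin.lastCases (Fin.lastCases c (fun _ => 0) b)
      (fun i => Fin.lastCases 0 (fun j => M i j) b) a

/-- Partial transpose on the first tensor factor. -/
def ptransposeFst {d n : ℕ} (ρ : Matrix (Fin d × Fin n) (Fin d × Fin n) ℂ) :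
    Matrix (Fin d × Fin n) (Fin d × Fin n) ℂ :=
  Matrix.of fun p q => ρ (q.1, p.2) (p.1, q.2)

/-! Since `(Φ ⊗ id)(ρ ⊗ τ) = Φ ρ ⊗ τ`, the image of a separable state is a convex combination
of products of positive semidefinite matrices, hence positive semidefinite, and trace preservation
of `Φ` passes to `Φ ⊗ id`. A positive semidefinite matrix `A` of trace one has trace norm one,
because `√(AᴴA) = √(A²) = A`. -/

theorem traceNorm_eq_re_trace_cfc_sqrt {ι : Type*} [Fintype ι] [DecidableEq ι]
    (A : Matrix ι ι ℂ) : traceNorm A = (cfc Real.sqrt (Aᴴ * A)).trace.re := by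
  rw [traceNorm, (Matrix.posSemidef_conjTranspose_mul_self A).1.cfc_eq]
  rfl

open scoped MatrixOrder in
theorem traceNorm_eq_re_trace_of_posSemidef {ι : Type*} [Fintype ι] [DecidableEq ι]
    {A : Matrix ι ι ℂ} (hA : A.PosSemidef) : traceNorm A = A.trace.re := by
  have hAA : 0 ≤ A * A := by
    simpa only [hA.isHermitian.eq] using (Matrix.posSemidef_conjTranspose_mul_self A).nonneg
  rw [traceNorm_eq_re_trace_cfc_sqrt, hA.isHermitian.eq, ← cfcₙ_eq_cfc (by fun_prop) (by simp),
    ← CFC.sqrt_eq_real_sqrt (A * A) hAA, CFC.sqrt_mul_self A hA.nonneg]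

theorem tensorId_kronecker {m k n : ℕ}
    (Φ : Matrix (Fin m) (Fin m) ℂ →ₗ[ℂ] Matrix (Fin k) (Fin k) ℂ)
    (A : Matrix (Fin m) (Fin m) ℂ) (B : Matrix (Fin n) (Fin n) ℂ) :
    tensorId n Φ (A ⊗ₖ B) = Φ A ⊗ₖ B := by
  ext p q
  have hblock : (Matrix.of fun i j => (A ⊗ₖ B) (i, p.2) (j, q.2)) = B p.2 q.2 • A := by
    ext i j
    simp [mul_comm]
  change Φ (Matrix.of fun i j => (A ⊗ₖ B) (i, p.2) (j, q.2)) p.1 q.1 = _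
  rw [hblock, map_smul]
  simp [mul_comm]

theorem trace_tensorId {m k n : ℕ}
    {Φ : Matrix (Fin m) (Fin m) ℂ →ₗ[ℂ] Matrix (Fin k) (Fin k) ℂ}
    (hTP : IsTracePreserving Φ) (M : Matrix (Fin m × Fin n) (Fin m × Fin n) ℂ) :
    (tensorId n Φ M).trace = M.trace := by
  simp only [Matrix.trace, Fintype.sum_prod_type_right]
  refine Finset.sum_congr rfl fun b _ => ?_
  exact hTP (Matrix.of fun i j => M (i, b) (j, b))

theorem IsSeparable.trace_eq_one {m n : ℕ} {σ : Matrix (Fin m × Fin n) (Fin m × Fin n) ℂ}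
    (hσ : IsSeparable σ) : σ.trace = 1 := by
  obtain ⟨N, p, ρ, τ, -, hsum, hρ, hτ, rfl⟩ := hσ
  simp [Matrix.trace_sum, Matrix.trace_kronecker, (hρ _).2, (hτ _).2, ← Complex.ofReal_sum,
    hsum]

theorem IsSeparable.posSemidef_tensorId {m k n : ℕ}
    {Φ : Matrix (Fin m) (Fin m) ℂ →ₗ[ℂ] Matrix (Fin k) (Fin k) ℂ} (hpos : IsPositiveMap Φ)
    {σ : Matrix (Fin m × Fin n) (Fin m × Fin n) ℂ} (hσ : IsSeparable σ) :
    (tensorId n Φ σ).PosSemidef := by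
  obtain ⟨N, p, ρ, τ, hp, -, hρ, hτ, rfl⟩ := hσ
  simp only [map_sum, map_smul, tensorId_kronecker]
  exact Matrix.posSemidef_sum _ fun i _ =>
    ((hpos _ (hρ i).1).kronecker (hτ i).1).smul (by exact_mod_cast hp i)

/-- If `Φ` is positive and trace-preserving and `σ` is a separable bipartite state,
then `(Φ ⊗ id_n)[σ]` is positive semidefinite and `‖(Φ ⊗ id_n)[σ]‖_tr = 1`;
equivalently, the generalized negativity `(‖(Φ ⊗ id_n)[σ]‖_tr − 1)/2` equals `0`. -/
theorem generalized_negativity_eq_zero_of_separable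
    {m k n : ℕ} (Φ : Matrix (Fin m) (Fin m) ℂ →ₗ[ℂ] Matrix (Fin k) (Fin k) ℂ)
    (hpos : IsPositiveMap Φ) (hTP : IsTracePreserving Φ)
    (σ : Matrix (Fin m × Fin n) (Fin m × Fin n) ℂ) (hσ : IsSeparable σ) :
    (tensorId n Φ σ).PosSemidef ∧ traceNorm (tensorId n Φ σ) = 1 ∧
      (traceNorm (tensorId n Φ σ) - 1) / 2 = 0 := by
  have hPSD := hσ.posSemidef_tensorId hpos
  have hnorm : traceNorm (tensorId n Φ σ) = 1 := by
    rw [traceNorm_eq_re_trace_of_posSemidef hPSD, trace_tensorId hTP, hσ.trace_eq_one,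
      Complex.one_re]
  exact ⟨hPSD, hnorm, by rw [hnorm]; norm_num⟩

end ChannelDiscrimination
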